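/- Proposition 2. Let {ι_i : {0,…,n−1} → {0,…,N−1}}_{i=0}^{m−1} be a window partition (each ι_i injective, ranges pairwise disjoint and covering {0,…,N−1}). Let Q, K, V be Ĉ×N real matrices, and for each window i let Q̃_i, K̃_i, Ṽ_i be the Ĉ×n matrices with Q̃_i(c,j) = Q(c, ι_i(j)) (likewise for K̃_i, Ṽ_i), and let Q̈_i, K̈_i, V̈_i be their zero-paddings along ι_i. Define the per-window attention outputs Õ_i = rowSoftmax(Q̃_i · K̃_iᵀ) · Ṽ_i and the padded outputs Ö_i = rowSoftmax(Q̈_i · K̈_iᵀ) · V̈_i. Then the window-reverse of {Õ_i} equals Σ_{i=0}^{m−1} Ö_i; that is, local channel-wise self-attention computed independently within each window and then window-reversed coincides with the aggregation of the channel-wise self-attentions of the zero-padded (band-pass-filtered) features. -/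

import Mathlib

open Matrix

/-- Row-wise softmax of a real matrix. -/
noncomputable def rowSoftmax {a b : ℕ} (M : Matrix (Fin a) (Fin b) ℝ) :
    Matrix (Fin a) (Fin b) ℝ :=
  Matrix.of fun i j => Real.exp (M i j) / ∑ j', Real.exp (M i j')

/-- `Ap` is the zero-padding of the `Ĉ×n` matrix `A` along the injection `ι`:
columns of `A` are placed at positions `ι j` and all other columns are zero. -/
def IsZeroPad {C n N : ℕ} (ι : Fin n → Fin N) (A : Matrix (Fin C) (Fin n) ℝ)
    (Ap : Matrix (Fin C) (Fin N) ℝ) : Prop :=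
  (∀ c j, Ap c (ι j) = A c j) ∧ (∀ c k, (∀ j, ι j ≠ k) → Ap c k = 0)

/-- `ι` is a window partition of `N` token positions into `m` windows of size `n`:
each `ι i` is injective, ranges are pairwise disjoint, and the ranges cover everything. -/
def IsWindowPartition {m n N : ℕ} (ι : Fin m → Fin n → Fin N) : Prop :=
  (∀ i, Function.Injective (ι i)) ∧
  (∀ i i', i ≠ i' → ∀ j j', ι i j ≠ ι i' j') ∧
  (∀ k : Fin N, ∃ i j, ι i j = k)

/-- The restriction of a `Ĉ×N` matrix to the window `ι`. -/
def windowRestrict {C n N : ℕ} (ι : Fin n → Fin N) (A : Matrix (Fin C) (Fin N) ℝ) :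
    Matrix (Fin C) (Fin n) ℝ :=
  Matrix.of fun c j => A c (ι j)

/-!
Zero-padding along an injective window does not change the Gram matrix `Q Kᵀ`, since the extra
columns are zero, so the attention scores of the padded and of the windowed features agree; and
multiplying on the left by the softmax matrix preserves zero-padding. Hence each padded output
`Ö_i` is the zero-padding of `Õ_i`, and since the windows partition the positions, the
zero-paddings of the `Õ_i` add up to their window-reverse.
-/

namespace IsZeroPad

variable {C D n N : ℕ} {ι : Fin n → Fin N}

theorem mul_transpose {A : Matrix (Fin C) (Fin n) ℝ} {Ap : Matrix (Fin C) (Fin N) ℝ}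
    {B : Matrix (Fin D) (Fin n) ℝ} {Bp : Matrix (Fin D) (Fin N) ℝ}
    (hA : IsZeroPad ι A Ap) (hB : IsZeroPad ι B Bp) (hι : Function.Injective ι) :
    Ap * Bpᵀ = A * Bᵀ := by
  ext c d
  simp only [mul_apply, transpose_apply]
  refine (Fintype.sum_of_injective ι hι _ _ (fun k hk => ?_) fun j => by rw [hA.1, hB.1]).symm
  rw [hA.2 c k (by simpa using hk), zero_mul]

theorem mul_left {A : Matrix (Fin C) (Fin n) ℝ} {Ap : Matrix (Fin C) (Fin N) ℝ}
    (h : IsZeroPad ι A Ap) (M : Matrix (Fin D) (Fin C) ℝ) : IsZeroPad ι (M * A) (M * Ap) :=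
  ⟨fun c j => by simp only [mul_apply, h.1],
    fun c k hk => by simp only [mul_apply, h.2 _ k hk, mul_zero, Finset.sum_const_zero]⟩

end IsZeroPad

theorem eq_sum_of_isZeroPad {C m n N : ℕ} {ι : Fin m → Fin n → Fin N}
    (hdisj : ∀ i i', i ≠ i' → ∀ j j', ι i j ≠ ι i' j') (hcover : ∀ k : Fin N, ∃ i j, ι i j = k)
    {A : Fin m → Matrix (Fin C) (Fin n) ℝ} {Ap : Fin m → Matrix (Fin C) (Fin N) ℝ}
    (hAp : ∀ i, IsZeroPad (ι i) (A i) (Ap i)) {W : Matrix (Fin C) (Fin N) ℝ}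
    (hW : ∀ i c j, W c (ι i j) = A i c j) :
    W = ∑ i, Ap i := by
  ext c k
  obtain ⟨i₀, j₀, rfl⟩ := hcover k
  rw [Matrix.sum_apply, Finset.sum_eq_single i₀ ?_ (by simp), (hAp i₀).1, hW]
  exact fun i _ hi => (hAp i).2 c _ fun j => hdisj i i₀ hi j j₀

/-- Proposition 2: local channel-wise self-attention computed independently within each
window and then window-reversed coincides with the aggregation of the channel-wise
self-attentions of the zero-padded (band-pass-filtered) features. -/
theorem localSA_windowReverse_eq_sum_padded_SA {C m n N : ℕ}
    (ι : Fin m → Fin n → Fin N) (hι : IsWindowPartition ι)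
    (Q K V : Matrix (Fin C) (Fin N) ℝ)
    (Qp Kp Vp : Fin m → Matrix (Fin C) (Fin N) ℝ)
    (hQp : ∀ i, IsZeroPad (ι i) (windowRestrict (ι i) Q) (Qp i))
    (hKp : ∀ i, IsZeroPad (ι i) (windowRestrict (ι i) K) (Kp i))
    (hVp : ∀ i, IsZeroPad (ι i) (windowRestrict (ι i) V) (Vp i))
    (Ot : Fin m → Matrix (Fin C) (Fin n) ℝ)
    (hOt : ∀ i, Ot i =
      rowSoftmax (windowRestrict (ι i) Q * (windowRestrict (ι i) K)ᵀ) * windowRestrict (ι i) V)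
    (Op : Fin m → Matrix (Fin C) (Fin N) ℝ)
    (hOp : ∀ i, Op i = rowSoftmax (Qp i * (Kp i)ᵀ) * Vp i)
    (W : Matrix (Fin C) (Fin N) ℝ)
    (hW : ∀ i c j, W c (ι i j) = Ot i c j) :
    W = ∑ i, Op i := by
  obtain ⟨hinj, hdisj, hcover⟩ := hι
  have hOp_pad : ∀ i, IsZeroPad (ι i) (Ot i) (Op i) := fun i => by
    rw [hOp, (hQp i).mul_transpose (hKp i) (hinj i), hOt]
    exact (hVp i).mul_left _
  exact eq_sum_of_isZeroPad hdisj hcover hOp_pad hW
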